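/- arXiv:2309.11765 — 4 statements merged into one kernel-verified Lean document; each statement's English description precedes it below -/
import Mathlib

section
/- If a randomized mechanism M is (ε, δ)-differentially private, then the subsampled mechanism that first selects each record independently with probability γ (Poisson subsampling) and then runs M on the subsample is (ε', δ')-differentially private with ε' = log(1 + γ(e^ε − 1)) and δ' = γδ. -/
open MeasureTheory

variable {ι Ω : Type*} [MeasurableSpace Ω] [DecidableEq ι]

/-- Neighboring datasets: differ by addition/removal of one record. -/
def Neighbors (D D' : Finset ι) : Prop :=
  (∃ i ∉ D, D' = insert i D) ∨ (∃ i ∉ D', D = insert i D')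

/-- `(ε, δ)`-differential privacy. -/
def IsDP (M : Finset ι → Measure Ω) (ε δ : ℝ) : Prop :=
  ∀ D D', Neighbors D D' → ∀ S : Set Ω, MeasurableSet S →
    M D S ≤ ENNReal.ofReal (Real.exp ε) * M D' S + ENNReal.ofReal δ

/-- Poisson subsampling with rate `γ`: each record is kept independently with
probability `γ`, and then `M` is run on the subsample. -/
noncomputable def poissonSubsample (γ : ℝ) (M : Finset ι → Measure Ω) (D : Finset ι) :
    Measure Ω :=
  ∑ s ∈ D.powerset,
    (ENNReal.ofReal γ ^ s.card * ENNReal.ofReal (1 - γ) ^ (D.card - s.card)) • M s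

/-!
Write `P` for the output law of the subsampled mechanism on `D` and `Q` for the same mixture with
the record `i ∉ D` forced into every subsample. Then the law on `insert i D` is `(1 - γ) P + γ Q`,
and averaging the guarantee of `M` over the subsamples gives `Q ≤ e^ε P + δ` and `P ≤ e^ε Q + δ`.
Adding `i` thus costs at most a factor `1 + γ (e^ε - 1)` directly. For removing `i`, split
`P = (1 - γ) P + γ P` and bound `P ≤ t P + (1 + γ (e^ε - 1)) Q + δ` with `t = (e^ε - 1)(1 - γ)`,
a convex combination of the trivial bound and `P ≤ e^ε Q + δ` when `t < 1`.
-/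

open Finset
open scoped ENNReal

namespace ENNReal

theorem sum_mul_le_mul_sum_mul_add {α : Type*} {T : Finset α} {w f g : α → ℝ≥0∞} {a b : ℝ≥0∞}
    (hw : ∑ s ∈ T, w s = 1) (h : ∀ s ∈ T, f s ≤ a * g s + b) :
    ∑ s ∈ T, w s * f s ≤ a * ∑ s ∈ T, w s * g s + b :=
  calc ∑ s ∈ T, w s * f s ≤ ∑ s ∈ T, w s * (a * g s + b) :=
        sum_le_sum fun s hs => by gcongr; exact h s hs
    _ = a * ∑ s ∈ T, w s * g s + b := by
        simp only [mul_add, sum_add_distrib, ← sum_mul, hw, one_mul, mul_sum]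
        simp only [mul_left_comm]

theorem mix_le_of_le {P Q : ℝ≥0∞} {A γ δ : ℝ} (hA : 0 ≤ A) (hγ0 : 0 ≤ γ) (hγ1 : γ ≤ 1)
    (h : Q ≤ .ofReal A * P + .ofReal δ) :
    .ofReal (1 - γ) * P + .ofReal γ * Q ≤ .ofReal (1 + γ * (A - 1)) * P + .ofReal (γ * δ) :=
  calc .ofReal (1 - γ) * P + .ofReal γ * Q
      ≤ .ofReal (1 - γ) * P + .ofReal γ * (.ofReal A * P + .ofReal δ) := by gcongr
    _ = (.ofReal (1 - γ) + .ofReal γ * .ofReal A) * P + .ofReal γ * .ofReal δ := by ring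
    _ = .ofReal (1 + γ * (A - 1)) * P + .ofReal (γ * δ) := by
        rw [← ofReal_mul hγ0, ← ofReal_mul hγ0, ← ofReal_add (by linarith) (by positivity)]
        ring_nf

theorem le_mul_add_mul_add_of_le {P Q : ℝ≥0∞} {A c t δ : ℝ} (ht : 0 ≤ t) (hAc : (1 - t) * A ≤ c)
    (h : P ≤ .ofReal A * Q + .ofReal δ) :
    P ≤ .ofReal t * P + .ofReal c * Q + .ofReal δ := by
  rcases le_or_gt 1 t with ht1 | ht1
  · calc P = 1 * P := (one_mul P).symm
      _ ≤ .ofReal t * P := by gcongr; simpa using ofReal_le_ofReal ht1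
      _ ≤ .ofReal t * P + .ofReal c * Q + .ofReal δ := by rw [add_assoc]; exact le_self_add
  · calc P = .ofReal t * P + .ofReal (1 - t) * P := by
          rw [← add_mul, ← ofReal_add ht (by linarith), add_sub_cancel, ofReal_one, one_mul]
      _ ≤ .ofReal t * P + .ofReal (1 - t) * (.ofReal A * Q + .ofReal δ) := by gcongr
      _ = .ofReal t * P + .ofReal ((1 - t) * A) * Q + .ofReal (1 - t) * .ofReal δ := by
          rw [ofReal_mul (by linarith)]; ring
      _ ≤ .ofReal t * P + .ofReal c * Q + .ofReal δ := by
          gcongr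
          exact mul_le_of_le_one_left' (ofReal_le_one.mpr (by linarith))

theorem le_mix_of_le {P Q : ℝ≥0∞} {A γ δ : ℝ} (hA : 1 ≤ A) (hγ0 : 0 ≤ γ) (hγ1 : γ ≤ 1)
    (h : P ≤ .ofReal A * Q + .ofReal δ) :
    P ≤ .ofReal (1 + γ * (A - 1)) * (.ofReal (1 - γ) * P + .ofReal γ * Q) + .ofReal (γ * δ) := by
  set c := 1 + γ * (A - 1)
  set t := (A - 1) * (1 - γ)
  have hAc : (1 - t) * A ≤ c := by
    nlinarith [mul_nonneg (sub_nonneg.2 hγ1) (sq_nonneg (A - 1))]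
  have hP : P ≤ .ofReal t * P + .ofReal c * Q + .ofReal δ :=
    le_mul_add_mul_add_of_le (by positivity) hAc h
  have hc : ENNReal.ofReal c * .ofReal (1 - γ) = .ofReal (1 - γ) + .ofReal γ * .ofReal t := by
    rw [← ofReal_mul hγ0, ← ofReal_add (by linarith) (by positivity), ← ofReal_mul (by nlinarith)]
    congr 1
    simp only [c, t]
    ring
  calc P = .ofReal (1 - γ) * P + .ofReal γ * P := by
        rw [← add_mul, ← ofReal_add (by linarith) hγ0, sub_add_cancel, ofReal_one, one_mul]
    _ ≤ .ofReal (1 - γ) * P + .ofReal γ * (.ofReal t * P + .ofReal c * Q + .ofReal δ) := by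
        gcongr
    _ = .ofReal c * (.ofReal (1 - γ) * P + .ofReal γ * Q) + .ofReal (γ * δ) := by
        rw [ofReal_mul hγ0, mul_add (ENNReal.ofReal c), ← mul_assoc (ENNReal.ofReal c), hc]
        ring

end ENNReal

noncomputable def poissonWeight (γ : ℝ) (D s : Finset ι) : ℝ≥0∞ :=
  .ofReal γ ^ s.card * .ofReal (1 - γ) ^ (D.card - s.card)

theorem poissonWeight_insert_of_subset {γ : ℝ} {D s : Finset ι} {i : ι} (hi : i ∉ D)
    (hs : s ⊆ D) : poissonWeight γ (insert i D) s = .ofReal (1 - γ) * poissonWeight γ D s := by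
  have : (insert i D).card - s.card = D.card - s.card + 1 := by
    rw [card_insert_of_notMem hi]; have := card_le_card hs; omega
  rw [poissonWeight, poissonWeight, this, pow_succ]; ring

theorem poissonWeight_insert_insert {γ : ℝ} {D s : Finset ι} {i : ι} (hi : i ∉ D)
    (hs : s ⊆ D) : poissonWeight γ (insert i D) (insert i s) = .ofReal γ * poissonWeight γ D s := by
  rw [poissonWeight, poissonWeight, card_insert_of_notMem hi,
    card_insert_of_notMem fun h => hi (hs h), Nat.add_sub_add_right, pow_succ]
  ring

theorem sum_poissonWeight {γ : ℝ} (hγ0 : 0 ≤ γ) (hγ1 : γ ≤ 1) (D : Finset ι) :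
    ∑ s ∈ D.powerset, poissonWeight γ D s = 1 := by
  induction D using Finset.induction_on with
  | empty => simp [poissonWeight]
  | insert i D hi ih =>
    rw [sum_powerset_insert hi]
    calc ∑ s ∈ D.powerset, poissonWeight γ (insert i D) s
          + ∑ s ∈ D.powerset, poissonWeight γ (insert i D) (insert i s)
        = ∑ s ∈ D.powerset, .ofReal (1 - γ) * poissonWeight γ D s
          + ∑ s ∈ D.powerset, .ofReal γ * poissonWeight γ D s := by
          congr 1 <;> refine sum_congr rfl fun s hs => ?_
          · exact poissonWeight_insert_of_subset hi (mem_powerset.mp hs)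
          · exact poissonWeight_insert_insert hi (mem_powerset.mp hs)
      _ = 1 := by
          rw [← mul_sum, ← mul_sum, ih, ← add_mul, ← ENNReal.ofReal_add (by linarith) hγ0]
          simp

set_option linter.unusedSectionVars false in
theorem poissonSubsample_apply (γ : ℝ) (M : Finset ι → Measure Ω) (D : Finset ι) (S : Set Ω) :
    poissonSubsample γ M D S = ∑ s ∈ D.powerset, poissonWeight γ D s * M s S := by
  simp [poissonSubsample, poissonWeight]

theorem poissonSubsample_insert_apply {γ : ℝ} {M : Finset ι → Measure Ω} {D : Finset ι} {i : ι}
    (hi : i ∉ D) (S : Set Ω) :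
    poissonSubsample γ M (insert i D) S = .ofReal (1 - γ) * poissonSubsample γ M D S
      + .ofReal γ * ∑ s ∈ D.powerset, poissonWeight γ D s * M (insert i s) S := by
  rw [poissonSubsample_apply, poissonSubsample_apply, sum_powerset_insert hi, mul_sum, mul_sum]
  congr 1 <;> refine sum_congr rfl fun s hs => ?_
  · rw [poissonWeight_insert_of_subset hi (mem_powerset.mp hs), mul_assoc]
  · rw [poissonWeight_insert_insert hi (mem_powerset.mp hs), mul_assoc]

namespace IsDP

variable {M : Finset ι → Measure Ω} {ε δ γ : ℝ} {D : Finset ι} {i : ι} {S : Set Ω}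

theorem sum_insert_le (hM : IsDP M ε δ) (hγ0 : 0 ≤ γ) (hγ1 : γ ≤ 1) (hi : i ∉ D)
    (hS : MeasurableSet S) :
    ∑ s ∈ D.powerset, poissonWeight γ D s * M (insert i s) S
      ≤ .ofReal (Real.exp ε) * poissonSubsample γ M D S + .ofReal δ := by
  rw [poissonSubsample_apply]
  refine ENNReal.sum_mul_le_mul_sum_mul_add (sum_poissonWeight hγ0 hγ1 D) fun s hs => ?_
  exact hM _ _ (.inr ⟨i, fun h => hi (mem_powerset.mp hs h), rfl⟩) S hS

theorem le_sum_insert (hM : IsDP M ε δ) (hγ0 : 0 ≤ γ) (hγ1 : γ ≤ 1) (hi : i ∉ D)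
    (hS : MeasurableSet S) :
    poissonSubsample γ M D S
      ≤ .ofReal (Real.exp ε) * ∑ s ∈ D.powerset, poissonWeight γ D s * M (insert i s) S
        + .ofReal δ := by
  rw [poissonSubsample_apply]
  refine ENNReal.sum_mul_le_mul_sum_mul_add (sum_poissonWeight hγ0 hγ1 D) fun s hs => ?_
  exact hM _ _ (.inl ⟨i, fun h => hi (mem_powerset.mp hs h), rfl⟩) S hS

end IsDP

theorem poisson_subsampling_amplification_general
    (M : Finset ι → Measure Ω) (ε δ γ : ℝ) (hε : 0 ≤ ε)
    (hγ0 : 0 ≤ γ) (hγ1 : γ ≤ 1) (hM : IsDP M ε δ) :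
    IsDP (poissonSubsample γ M) (Real.log (1 + γ * (Real.exp ε - 1))) (γ * δ) := by
  have hA : 1 ≤ Real.exp ε := Real.one_le_exp hε
  intro D D' hN S hS
  rw [Real.exp_log (by nlinarith)]
  rcases hN with ⟨i, hi, rfl⟩ | ⟨i, hi, rfl⟩
  · rw [poissonSubsample_insert_apply hi]
    exact ENNReal.le_mix_of_le hA hγ0 hγ1 (hM.le_sum_insert hγ0 hγ1 hi hS)
  · rw [poissonSubsample_insert_apply hi]
    exact ENNReal.mix_le_of_le (by positivity) hγ0 hγ1 (hM.sum_insert_le hγ0 hγ1 hi hS)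

/-- Privacy amplification by Poisson subsampling. -/
theorem poisson_subsampling_amplification
    (M : Finset ι → Measure Ω) (ε δ γ : ℝ) (hε : 0 ≤ ε) (hδ : 0 ≤ δ)
    (hγ0 : 0 ≤ γ) (hγ1 : γ ≤ 1) (hM : IsDP M ε δ) :
    IsDP (poissonSubsample γ M) (Real.log (1 + γ * (Real.exp ε - 1))) (γ * δ) :=
  poisson_subsampling_amplification_general M ε δ γ hε hγ0 hγ1 hM
end

section
/- Report Noisy Max with Exponential Noise: let q₁(D), ..., q_k(D) be scoring functions each with ℓ∞-sensitivity at most Δ (i.e., |q_j(D) − q_j(D')| ≤ Δ for all neighboring D, D' and all j). The mechanism that outputs argmax_j (q_j(D) + Z_j), where Z_j are i.i.d. Exponential(ε/(2Δ)) random variables, is (ε, 0)-differentially private. -/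
/-!
Fix an output `j` and condition on the noise of all coordinates but the `j`-th. Passing from `D`
to a neighbour `D'` moves every score difference `(q j + Z j) - (q i + Z i)` by at most `2Δ`, so
if `j` wins for `D` at noise value `Z j`, it wins for `D'` at `Z j + 2Δ`. The `Expo(r)` density
satisfies `f (x - c) ≤ e^{r c} f x` for `c ≥ 0`, and `r · 2Δ = ε` for `r = ε/(2Δ)`; this bounds
each singleton probability, and summing over the output set finishes.
-/

open MeasureTheory

variable {X : Type*}

/-- Pure `(ε, 0)`-differential privacy with respect to a neighboring relation `N`. -/
def IsPureDP {Ω : Type*} [MeasurableSpace Ω] (N : X → X → Prop)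
    (M : X → Measure Ω) (ε : ℝ) : Prop :=
  ∀ D D', N D D' → ∀ S : Set Ω,
    M D S ≤ ENNReal.ofReal (Real.exp ε) * M D' S

open ProbabilityTheory Real Set
open scoped ENNReal

namespace List

variable {α β : Type*}

theorem argmax_eq_some_of_sub_le [DecidableEq α] [LinearOrder β] [AddCommGroup β]
    [IsOrderedAddMonoid β] {l : List α} {f g : α → β} {m : α}
    (hfg : ∀ a ∈ l, g a - g m ≤ f a - f m) (h : l.argmax f = some m) :
    l.argmax g = some m := by
  rw [argmax_eq_some_iff] at h ⊢
  obtain ⟨hm, hmax, htie⟩ := h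
  refine ⟨hm, fun a ha => ?_, fun a ha hle => htie a ha ?_⟩
  · exact sub_nonpos.mp ((hfg a ha).trans (sub_nonpos.mpr (hmax a ha)))
  · exact sub_nonneg.mp ((sub_nonneg.mpr hle).trans (hfg a ha))

theorem getD_argmax_eq_iff [LinearOrder β] {l : List α} (hl : l ≠ []) (f : α → β) (d m : α) :
    (l.argmax f).getD d = m ↔ l.argmax f = some m := by
  obtain ⟨a, ha⟩ := Option.ne_none_iff_exists'.mp (mt (argmax_eq_none (f := f)).mp hl)
  simp [ha]

end List

namespace ProbabilityTheory

theorem exponentialPDF_sub_le (r : ℝ) {c : ℝ} (hc : 0 ≤ c) (x : ℝ) :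
    exponentialPDF r (x - c) ≤ ENNReal.ofReal (exp (r * c)) * exponentialPDF r x := by
  rcases lt_or_ge (x - c) 0 with hxc | hxc
  · simp [exponentialPDF_of_neg hxc]
  rw [exponentialPDF_of_nonneg hxc, exponentialPDF_of_nonneg (by linarith),
    ← ENNReal.ofReal_mul (exp_nonneg _), mul_left_comm, ← exp_add,
    show r * c + -(r * x) = -(r * (x - c)) by ring]

theorem expMeasure_preimage_add_le (r : ℝ) {c : ℝ} (hc : 0 ≤ c) (A : Set ℝ) :
    expMeasure r ((· + c) ⁻¹' A) ≤ ENNReal.ofReal (exp (r * c)) * expMeasure r A := by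
  calc expMeasure r ((· + c) ⁻¹' A)
      = ∫⁻ x in (· + c) ⁻¹' A, exponentialPDF r (x + c - c) := by
        simp_rw [add_sub_cancel_right]
        exact withDensity_apply' _ _
    _ = ∫⁻ x in A, exponentialPDF r (x - c) :=
        (measurePreserving_add_right volume c).setLIntegral_comp_preimage_emb
          (measurableEmbedding_addRight c) (fun x => exponentialPDF r (x - c)) A
    _ ≤ ∫⁻ x in A, ENNReal.ofReal (exp (r * c)) * exponentialPDF r x :=
        lintegral_mono (exponentialPDF_sub_le r hc)
    _ = ENNReal.ofReal (exp (r * c)) * expMeasure r A := by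
        rw [lintegral_const_mul' _ _ ENNReal.ofReal_ne_top]
        exact congrArg _ (withDensity_apply' _ _).symm

end ProbabilityTheory

namespace MeasureTheory

theorem measurableSet_argmax_eq_some {Ω α β : Type*} [MeasurableSpace Ω] [DecidableEq α]
    [Countable α] [LinearOrder β] [TopologicalSpace β] [OrderClosedTopology β]
    [SecondCountableTopology β] [MeasurableSpace β] [OpensMeasurableSpace β] (l : List α)
    {f : Ω → α → β} (hf : ∀ a, Measurable fun ω => f ω a) (m : α) :
    MeasurableSet {ω | l.argmax (f ω) = some m} := by
  simp_rw [List.argmax_eq_some_iff]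
  measurability

theorem Measure.le_mul_of_forall_singleton_le {α : Type*} [MeasurableSpace α] [Countable α]
    [MeasurableSingletonClass α] {μ ν : Measure α} {K : ℝ≥0∞}
    (h : ∀ a, μ {a} ≤ K * ν {a}) (S : Set α) : μ S ≤ K * ν S := by
  have hS : ∀ a ∈ S, MeasurableSet (id ⁻¹' {a}) := fun a _ => measurableSet_singleton a
  rw [← preimage_id (s := S), ← tsum_measure_preimage_singleton S.to_countable hS,
    ← tsum_measure_preimage_singleton S.to_countable hS, ← ENNReal.tsum_mul_left]
  exact ENNReal.tsum_le_tsum fun a => h a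

variable {ι : Type*} [DecidableEq ι] {α : ι → Type*} [∀ i, MeasurableSpace (α i)]
  {μ : ∀ i, Measure (α i)}

theorem lmarginal_const_mul (s : Finset ι) (c : ℝ≥0∞) {f : (∀ i, α i) → ℝ≥0∞}
    (hf : Measurable f) (x : ∀ i, α i) :
    (∫⋯∫⁻_s, (fun x => c * f x) ∂μ) x = c * (∫⋯∫⁻_s, f ∂μ) x :=
  lintegral_const_mul c (hf.comp measurable_updateFinset)

theorem lintegral_indicator_one_update (x : ∀ i, α i) (j : ι) {A : Set (∀ i, α i)}
    (hA : MeasurableSet A) :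
    ∫⁻ y, A.indicator 1 (Function.update x j y) ∂μ j = μ j (Function.update x j ⁻¹' A) := by
  rw [← lintegral_indicator_one (hA.preimage (measurable_update x))]
  rfl

theorem Measure.pi_le_mul_of_update_mem [Fintype ι] [∀ i, SigmaFinite (μ i)] {j : ι}
    {T : α j → α j} {K : ℝ≥0∞} (hT : ∀ E, MeasurableSet E → μ j (T ⁻¹' E) ≤ K * μ j E)
    {A B : Set (∀ i, α i)} (hA : MeasurableSet A) (hB : MeasurableSet B)
    (hAB : ∀ x ∈ A, Function.update x j (T (x j)) ∈ B) :
    Measure.pi μ A ≤ K * Measure.pi μ B := by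
  rcases A.eq_empty_or_nonempty with rfl | ⟨x₀, -⟩
  · simp
  have slice : ∀ x, (∫⋯∫⁻_{j}, A.indicator 1 ∂μ) x ≤ K * (∫⋯∫⁻_{j}, B.indicator 1 ∂μ) x := by
    intro x
    simp only [lmarginal_singleton, lintegral_indicator_one_update x j hA,
      lintegral_indicator_one_update x j hB]
    exact (measure_mono fun y hy => by simpa using hAB _ hy).trans
      (hT _ (hB.preimage (measurable_update x)))
  have peel : ∀ {C : Set (∀ i, α i)}, MeasurableSet C → Measure.pi μ C =
      (∫⋯∫⁻_(Finset.univ.erase j), ∫⋯∫⁻_{j}, C.indicator 1 ∂μ ∂μ) x₀ := by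
    intro C hC
    rw [← lintegral_indicator_one hC, lintegral_eq_lmarginal_univ x₀,
      lmarginal_erase' _ (measurable_one.indicator hC) (Finset.mem_univ j), lmarginal_singleton]
  rw [peel hA, peel hB, ← lmarginal_const_mul _ _ ((measurable_one.indicator hB).lmarginal μ) x₀]
  exact lmarginal_mono slice x₀

end MeasureTheory

/-- Report Noisy Max with Exponential noise: given `k` scoring functions each of
ℓ∞-sensitivity at most `Δ`, outputting the index maximizing `q j D + Z j` with
`Z j` i.i.d. `Expo(ε/(2Δ))` is `(ε, 0)`-differentially private. -/
theorem report_noisy_max_exponential (N : X → X → Prop)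
    (k : ℕ) (hk : 0 < k) (q : Fin k → X → ℝ) (Δ ε : ℝ)
    (hΔ : 0 < Δ) (hε : 0 < ε)
    (hsens : ∀ D D', N D D' → ∀ j, |q j D - q j D'| ≤ Δ) :
    IsPureDP N
      (fun D =>
        (Measure.pi fun _ : Fin k => ProbabilityTheory.expMeasure (ε / (2 * Δ))).map
          (fun Z => ((List.finRange k).argmax (fun j => q j D + Z j)).getD ⟨0, hk⟩))
      ε := by
  intro D D' hN
  have : IsProbabilityMeasure (expMeasure (ε / (2 * Δ))) :=
    isProbabilityMeasure_expMeasure (by positivity)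
  have hl : List.finRange k ≠ [] := by simpa [List.finRange_eq_nil_iff] using hk.ne'
  set wins : X → Fin k → Set (Fin k → ℝ) :=
    fun D j => {Z | (List.finRange k).argmax (fun i => q i D + Z i) = some j}
  have hwins : ∀ D j, MeasurableSet (wins D j) :=
    fun D j => measurableSet_argmax_eq_some _ (fun i => by fun_prop) j
  have hpre : ∀ D j, (fun Z : Fin k → ℝ =>
      ((List.finRange k).argmax (fun i => q i D + Z i)).getD ⟨0, hk⟩) ⁻¹' {j} = wins D j :=
    fun D j => Set.ext fun Z => List.getD_argmax_eq_iff hl _ _ _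
  have hmeas : ∀ D, Measurable fun Z : Fin k → ℝ =>
      ((List.finRange k).argmax (fun i => q i D + Z i)).getD ⟨0, hk⟩ :=
    fun D => measurable_to_countable' fun j => hpre D j ▸ hwins D j
  refine Measure.le_mul_of_forall_singleton_le fun j => ?_
  have hshift : ∀ Z ∈ wins D j, Function.update Z j (Z j + 2 * Δ) ∈ wins D' j := by
    intro Z hZ
    refine List.argmax_eq_some_of_sub_le (fun i _ => ?_) hZ
    have := abs_le.mp (hsens D D' hN i)
    have := abs_le.mp (hsens D D' hN j)
    rcases eq_or_ne i j with rfl | hij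
    · simp
    · simp only [Function.update_self, Function.update_of_ne hij]
      linarith
  rw [Measure.map_apply (hmeas D) (measurableSet_singleton j),
    Measure.map_apply (hmeas D') (measurableSet_singleton j), hpre, hpre]
  calc _ ≤ ENNReal.ofReal (exp (ε / (2 * Δ) * (2 * Δ))) * _ :=
        Measure.pi_le_mul_of_update_mem (fun E _ => expMeasure_preimage_add_le _ (by positivity) E)
          (hwins D j) (hwins D' j) hshift
    _ = _ := by rw [div_mul_cancel₀ _ (by positivity)]
end

section
/- The function δ(ε) = Φ(Δ/(2σ) − εσ/Δ) − e^ε · Φ(−Δ/(2σ) − εσ/Δ) is nonnegative for all ε ≥ 0, where Φ is the standard normal CDF, Δ > 0, and σ > 0. -/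
/-!
Write `a = Δ/(2σ)` and `t = εσ/Δ`, so that `ε = 2at`. Shifting the variable, `Φ(-a - t)` is the
integral over `x ≤ a - t` of the normal density centred at `2a`, while `Φ(a - t)` is the integral
over the same half-line of the standard one. Their likelihood ratio is `exp (2a(a - x))`, which is
at least `exp (2at) = exp ε` on that half-line, so the inequality holds pointwise under the integral.
-/

open MeasureTheory ProbabilityTheory Real Set

noncomputable def Phi (t : ℝ) : ℝ :=
  ∫ x in Set.Iic t, (1 / Real.sqrt (2 * Real.pi)) * Real.exp (-x ^ 2 / 2)

lemma Phi_eq_setIntegral_gaussianPDFReal (m t : ℝ) :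
    Phi t = ∫ x in Iic (t + m), gaussianPDFReal m 1 x := by
  have hstd : Phi t = ∫ x in Iic t, gaussianPDFReal 0 1 x := by
    simp [Phi, gaussianPDFReal]
  rw [hstd, ← (measurePreserving_add_right volume m).setIntegral_preimage_emb
    (measurableEmbedding_addRight m) _ (Iic (t + m)), preimage_add_const_Iic, add_sub_cancel_right]
  simp_rw [gaussianPDFReal_add, sub_self]

lemma exp_mul_gaussianPDFReal_shift_le {a t x : ℝ} (ha : 0 ≤ a) (hx : x ≤ a - t) :
    exp (2 * a * t) * gaussianPDFReal (2 * a) 1 x ≤ gaussianPDFReal 0 1 x := by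
  simp only [gaussianPDFReal, NNReal.coe_one, mul_one, sub_zero]
  rw [mul_left_comm, ← exp_add]
  gcongr
  nlinarith

lemma exp_mul_Phi_neg_sub_le (a t : ℝ) (ha : 0 ≤ a) :
    exp (2 * a * t) * Phi (-a - t) ≤ Phi (a - t) := by
  rw [Phi_eq_setIntegral_gaussianPDFReal (2 * a), Phi_eq_setIntegral_gaussianPDFReal 0,
    ← integral_const_mul, show -a - t + 2 * a = a - t + 0 by ring]
  refine setIntegral_mono_on ((integrable_gaussianPDFReal _ _).const_mul _).integrableOn
    (integrable_gaussianPDFReal _ _).integrableOn measurableSet_Iic fun x hx => ?_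
  exact exp_mul_gaussianPDFReal_shift_le ha (by simpa using hx)

theorem gaussian_privacy_curve_nonneg_general (Δ σ : ℝ) (hΔ : 0 < Δ) (hσ : 0 < σ)
    (ε : ℝ) :
    0 ≤ Phi (Δ / (2 * σ) - ε * σ / Δ) -
        Real.exp ε * Phi (-(Δ / (2 * σ)) - ε * σ / Δ) := by
  have key := exp_mul_Phi_neg_sub_le (Δ / (2 * σ)) (ε * σ / Δ) (by positivity)
  rwa [show 2 * (Δ / (2 * σ)) * (ε * σ / Δ) = ε by field_simp, ← sub_nonneg] at key

/-- The privacy curve of the Gaussian mechanism is nonnegative for `ε ≥ 0`. -/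
theorem gaussian_privacy_curve_nonneg (Δ σ : ℝ) (hΔ : 0 < Δ) (hσ : 0 < σ)
    (ε : ℝ) (hε : 0 ≤ ε) :
    0 ≤ Phi (Δ / (2 * σ) - ε * σ / Δ) -
        Real.exp ε * Phi (-(Δ / (2 * σ)) - ε * σ / Δ) :=
  gaussian_privacy_curve_nonneg_general Δ σ hΔ hσ ε
end

section
/- The function δ(ε) = Φ(Δ/(2σ) − εσ/Δ) − e^ε · Φ(−Δ/(2σ) − εσ/Δ) is monotonically decreasing in ε on [0, ∞), for fixed Δ > 0 and σ > 0, where Φ is the standard normal CDF. -/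
/-!
Writing `a = Δ/(2σ)` and `c = σ/Δ`, so that `2ac = 1`, the curve is
`δ(ε) = Φ(a - cε) - e^ε Φ(-a - cε)`. The Gaussian density satisfies
`φ(a - t) = e^{2at} φ(-a - t)`, so at `t = cε` the two density terms in `δ'(ε)` cancel and
`δ'(ε) = -e^ε Φ(-a - cε) ≤ 0` for every real `ε`.
-/

open Real MeasureTheory Set

theorem hasDerivAt_integral_Iic {f : ℝ → ℝ} (hf : Integrable f) (hcont : Continuous f) (t : ℝ) :
    HasDerivAt (fun s => ∫ x in Iic s, f x) (f t) t := by
  have hsplit : ∀ s, ∫ x in Iic s, f x = (∫ x in Iic 0, f x) + ∫ x in (0 : ℝ)..s, f x := by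
    intro s
    rw [← intervalIntegral.integral_Iic_sub_Iic hf.integrableOn hf.integrableOn]
    ring
  rw [funext hsplit]
  exact (intervalIntegral.integral_hasDerivAt_right hf.intervalIntegrable
    (hcont.stronglyMeasurableAtFilter _ _) hcont.continuousAt).const_add _

noncomputable def phi (x : ℝ) : ℝ :=
  (1 / √(2 * π)) * exp (-x ^ 2 / 2)

theorem continuous_phi : Continuous phi := by
  unfold phi
  fun_prop

theorem integrable_phi : Integrable phi := by
  refine ((integrable_exp_neg_mul_sq (by norm_num : (0 : ℝ) < 1 / 2)).const_mul
    (1 / √(2 * π))).congr (Filter.Eventually.of_forall fun x => ?_)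
  simp only [phi]
  ring_nf

theorem phi_sub_eq_exp_mul_phi_neg_sub (a t : ℝ) :
    phi (a - t) = exp (2 * a * t) * phi (-a - t) := by
  rw [phi, phi, mul_left_comm, ← exp_add]
  ring_nf

theorem hasDerivAt_Phi (t : ℝ) : HasDerivAt Phi (phi t) t :=
  hasDerivAt_integral_Iic integrable_phi continuous_phi t

theorem Phi_nonneg (t : ℝ) : 0 ≤ Phi t :=
  setIntegral_nonneg measurableSet_Iic fun _ _ => by positivity

theorem hasDerivAt_Phi_sub_exp_mul_Phi {a c : ℝ} (hac : 2 * a * c = 1) (ε : ℝ) :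
    HasDerivAt (fun ε => Phi (a - ε * c) - exp ε * Phi (-a - ε * c))
      (-(exp ε * Phi (-a - ε * c))) ε := by
  have hlin : ∀ b, HasDerivAt (fun ε => b - ε * c) (-c) ε := fun b => by
    simpa using ((hasDerivAt_id ε).mul_const c).const_sub b
  have hderiv := ((hasDerivAt_Phi _).comp ε (hlin a)).sub
    ((hasDerivAt_exp ε).mul ((hasDerivAt_Phi _).comp ε (hlin (-a))))
  have hdensity : phi (a - ε * c) = exp ε * phi (-a - ε * c) := by
    rw [phi_sub_eq_exp_mul_phi_neg_sub]
    congr 2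
    linear_combination ε * hac
  refine hderiv.congr_deriv ?_
  simp only [Function.comp_apply, hdensity]
  ring

theorem antitone_Phi_sub_exp_mul_Phi {a c : ℝ} (hac : 2 * a * c = 1) :
    Antitone fun ε => Phi (a - ε * c) - exp ε * Phi (-a - ε * c) :=
  antitone_of_hasDerivAt_nonpos (hasDerivAt_Phi_sub_exp_mul_Phi hac) fun ε =>
    neg_nonpos.mpr (mul_nonneg (exp_pos ε).le (Phi_nonneg _))

/-- The privacy curve of the Gaussian mechanism is monotonically decreasing
in `ε` on `[0, ∞)`. -/
theorem gaussian_privacy_curve_antitone (Δ σ : ℝ) (hΔ : 0 < Δ) (hσ : 0 < σ) :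
    AntitoneOn
      (fun ε : ℝ =>
        Phi (Δ / (2 * σ) - ε * σ / Δ) -
          Real.exp ε * Phi (-(Δ / (2 * σ)) - ε * σ / Δ))
      (Set.Ici 0) := by
  have hac : 2 * (Δ / (2 * σ)) * (σ / Δ) = 1 := by
    field_simp
  simp only [mul_div_assoc]
  exact (antitone_Phi_sub_exp_mul_Phi hac).antitoneOn _
end
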